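/- Let K be a compact metric space and, for δ > 0, let N_K(δ) be the minimum number of Borel subsets of diameter at most δ needed to cover K. Then for every δ, κ > 0 and every finite Borel measure ν on K with m := ν(K), diam(ν, m − κ) ≤ Sep(ν; κ/N_K(δ), κ/N_K(δ)) + 2δ. -/

import Mathlib

open MeasureTheory Metric Set Filter Topology ENNReal

noncomputable section

/-- The extended distance `d(A,B)` between two subsets of an (extended) metric space. -/
def setEDist {X : Type*} [PseudoEMetricSpace X] (A B : Set X) : ℝ≥0∞ :=
  ⨅ (x ∈ A) (y ∈ B), edist x y

/-- The partial diameter `diam(ν, ν(X) − κ)`: the infimum of the diameters of Borel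
subsets of measure at least `ν(X) − κ`. -/
def partialDiam {X : Type*} [PseudoEMetricSpace X] [MeasurableSpace X]
    (ν : Measure X) (κ : ℝ≥0∞) : ℝ≥0∞ :=
  ⨅ (A : Set X) (_ : MeasurableSet A) (_ : ν univ - κ ≤ ν A), EMetric.diam A

/-- The separation distance `Sep(ν; κ₁, κ₂)`: the supremum of `d(A,B)` over Borel sets
`A, B` with `ν(A) ≥ κ₁` and `ν(B) ≥ κ₂`. -/
def sepDist {X : Type*} [PseudoEMetricSpace X] [MeasurableSpace X]
    (ν : Measure X) (κ₁ κ₂ : ℝ≥0∞) : ℝ≥0∞ :=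
  ⨆ (A : Set X) (B : Set X) (_ : MeasurableSet A) (_ : MeasurableSet B)
    (_ : κ₁ ≤ ν A) (_ : κ₂ ≤ ν B), setEDist A B

/-- The observable diameter `ObsDiam_Y(X; −κ)`. -/
def obsDiam (Y : Type*) [PseudoEMetricSpace Y] [MeasurableSpace Y]
    {X : Type*} [PseudoEMetricSpace X] [MeasurableSpace X]
    (μ : Measure X) (κ : ℝ≥0∞) : ℝ≥0∞ :=
  ⨆ (f : X → Y) (_ : LipschitzWith 1 f), partialDiam (Measure.map f μ) κ

/-- A sequence of mm-spaces is a Lévy family if its observable diameters (viewed in `ℝ`)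
tend to zero for every `κ > 0`. -/
def IsLevyFamily (X : ℕ → Type*) [∀ n, PseudoEMetricSpace (X n)]
    [∀ n, MeasurableSpace (X n)] (μ : ∀ n, Measure (X n)) : Prop :=
  ∀ κ : ℝ≥0∞, 0 < κ → Tendsto (fun n => obsDiam ℝ (μ n) κ) atTop (nhds 0)

/-- `N_K(δ)`: the minimum number of Borel subsets of diameter at most `δ` needed
to cover `K`. -/
def coverNum (K : Type*) [PseudoEMetricSpace K] [MeasurableSpace K] (δ : ℝ≥0∞) : ℕ :=
  sInf {n : ℕ | ∃ c : Fin n → Set K,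
    (∀ i, MeasurableSet (c i) ∧ EMetric.diam (c i) ≤ δ) ∧ (⋃ i, c i) = univ}

/-!
Cover `K` by `N = N_K(δ)` Borel sets of diameter at most `δ`. The pieces of measure less than
`κ / N` carry total mass at most `κ`, so the union `A` of the remaining "heavy" pieces has
`ν(A) ≥ m − κ`. Any two points of `A` lie in heavy pieces `C, C'`, and
`d(x, y) ≤ diam C + d(C, C') + diam C' ≤ 2δ + Sep(ν; κ/N, κ/N)`.
-/

section Cover

variable (X : Type*) [PseudoEMetricSpace X] [CompactSpace X]
  [MeasurableSpace X] [OpensMeasurableSpace X]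

theorem exists_measurable_cover_diam_le {δ : ℝ≥0∞} (hδ : 0 < δ) :
    ∃ (n : ℕ) (c : Fin n → Set X),
      (∀ i, MeasurableSet (c i) ∧ ediam (c i) ≤ δ) ∧ (⋃ i, c i) = univ := by
  have hδ2 : 0 < δ / 2 := ENNReal.div_pos hδ.ne' ofNat_ne_top
  obtain ⟨t, ht⟩ := isCompact_univ.elim_finite_subcover (fun x : X => eball x (δ / 2))
    (fun _ => isOpen_eball) fun x _ => mem_iUnion.2 ⟨x, mem_eball_self hδ2⟩
  refine ⟨t.card, fun i => eball (t.equivFin.symm i : X) (δ / 2), fun i =>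
    ⟨isOpen_eball.measurableSet, ?_⟩, eq_univ_of_forall fun x => ?_⟩
  · refine ediam_eball_le.trans_eq ?_
    rw [ENNReal.mul_div_cancel two_ne_zero ofNat_ne_top]
  · obtain ⟨y, hyt, hxy⟩ := mem_iUnion₂.1 (ht (mem_univ x))
    exact mem_iUnion.2 ⟨t.equivFin ⟨y, hyt⟩, by simpa using hxy⟩

theorem exists_measurable_cover_card_coverNum {δ : ℝ≥0∞} (hδ : 0 < δ) :
    ∃ c : Fin (coverNum X δ) → Set X,
      (∀ i, MeasurableSet (c i) ∧ ediam (c i) ≤ δ) ∧ (⋃ i, c i) = univ :=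
  Nat.sInf_mem (exists_measurable_cover_diam_le X hδ)

end Cover

section Measure

variable {X : Type*} [MeasurableSpace X] (ν : Measure X)

theorem measure_univ_sub_le_measure_biUnion_heavy {ι : Type*} [Fintype ι] {c : ι → Set X}
    (hcov : (⋃ i, c i) = univ) (κ : ℝ≥0∞) :
    ν univ - κ ≤ ν (⋃ (i) (_ : κ / Fintype.card ι ≤ ν (c i)), c i) := by
  set κ' := κ / Fintype.card ι
  have hlight : ν (⋃ (i) (_ : ν (c i) < κ'), c i) ≤ κ :=
    calc ν (⋃ (i) (_ : ν (c i) < κ'), c i) ≤ ∑ i, ν (⋃ (_ : ν (c i) < κ'), c i) :=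
          measure_iUnion_fintype_le ν _
      _ ≤ ∑ _i : ι, κ' := by
          refine Finset.sum_le_sum fun i _ => ?_
          by_cases h : ν (c i) < κ'
          · simpa [h] using h.le
          · simp [h]
      _ ≤ κ := by simpa using ENNReal.mul_div_le
  have hsplit : univ ⊆ (⋃ (i) (_ : κ' ≤ ν (c i)), c i) ∪ ⋃ (i) (_ : ν (c i) < κ'), c i := by
    rw [← hcov, ← iUnion_union_distrib]
    refine iUnion_mono fun i => ?_
    rcases le_or_gt κ' (ν (c i)) with h | h <;> simp [h]
  rw [tsub_le_iff_right]
  exact (measure_mono hsplit).trans ((measure_union_le _ _).trans (by gcongr))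

end Measure

section PseudoEMetric

variable {X : Type*} [PseudoEMetricSpace X]

theorem edist_le_ediam_add_setEDist_add_ediam {A B : Set X} {x y : X} (hx : x ∈ A)
    (hy : y ∈ B) : edist x y ≤ ediam A + setEDist A B + ediam B := by
  rw [add_right_comm, ← tsub_le_iff_left]
  refine le_iInf₂ fun a ha => le_iInf₂ fun b hb => tsub_le_iff_left.2 ?_
  calc edist x y ≤ edist x a + edist a b + edist b y := edist_triangle4 _ _ _ _
    _ ≤ ediam A + edist a b + ediam B := by
        gcongr
        exacts [edist_le_ediam_of_mem hx ha, edist_le_ediam_of_mem hb hy]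
    _ = ediam A + ediam B + edist a b := add_right_comm _ _ _

variable [MeasurableSpace X] (ν : Measure X)

theorem partialDiam_le_ediam {κ : ℝ≥0∞} {A : Set X} (hA : MeasurableSet A)
    (hνA : ν univ - κ ≤ ν A) : partialDiam ν κ ≤ ediam A :=
  iInf₂_le_of_le A hA (iInf_le _ hνA)

theorem setEDist_le_sepDist {κ₁ κ₂ : ℝ≥0∞} {A B : Set X} (hA : MeasurableSet A)
    (hB : MeasurableSet B) (hνA : κ₁ ≤ ν A) (hνB : κ₂ ≤ ν B) :
    setEDist A B ≤ sepDist ν κ₁ κ₂ :=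
  le_iSup₂_of_le A B <| le_iSup₂_of_le hA hB <| le_iSup₂_of_le (f := fun _ _ => setEDist A B)
    hνA hνB le_rfl

theorem ediam_biUnion_le_sepDist_add {ι : Type*} {c : ι → Set X} {δ κ' : ℝ≥0∞}
    (hc : ∀ i, MeasurableSet (c i) ∧ ediam (c i) ≤ δ) :
    ediam (⋃ (i) (_ : κ' ≤ ν (c i)), c i) ≤ sepDist ν κ' κ' + δ + δ := by
  refine ediam_le fun x hx y hy => ?_
  obtain ⟨i, hi, hxi⟩ := mem_iUnion₂.1 hx
  obtain ⟨j, hj, hyj⟩ := mem_iUnion₂.1 hy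
  calc edist x y ≤ ediam (c i) + setEDist (c i) (c j) + ediam (c j) :=
        edist_le_ediam_add_setEDist_add_ediam hxi hyj
    _ ≤ δ + sepDist ν κ' κ' + δ := by
        gcongr
        exacts [(hc i).2, setEDist_le_sepDist ν (hc i).1 (hc j).1 hi hj, (hc j).2]
    _ = sepDist ν κ' κ' + δ + δ := by ring

end PseudoEMetric

theorem stmt_12_general {K : Type*} [MetricSpace K] [CompactSpace K]
    [MeasurableSpace K] [BorelSpace K]
    (ν : Measure K)
    (δ : ℝ) (hδ : 0 < δ) (κ : ℝ≥0∞) :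
    partialDiam ν κ ≤
      sepDist ν (κ / (coverNum K (ENNReal.ofReal δ) : ℝ≥0∞))
        (κ / (coverNum K (ENNReal.ofReal δ) : ℝ≥0∞)) + ENNReal.ofReal (2 * δ) := by
  obtain ⟨c, hc, hcov⟩ := exists_measurable_cover_card_coverNum K (ENNReal.ofReal_pos.2 hδ)
  have hheavy := measure_univ_sub_le_measure_biUnion_heavy ν hcov κ
  rw [Fintype.card_fin] at hheavy
  calc partialDiam ν κ
      ≤ ediam (⋃ (i) (_ : κ / coverNum K (ENNReal.ofReal δ) ≤ ν (c i)), c i) :=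
        partialDiam_le_ediam ν (.iUnion fun i => .iUnion fun _ => (hc i).1) hheavy
    _ ≤ _ := ediam_biUnion_le_sepDist_add ν hc
    _ = _ := by rw [two_mul, ENNReal.ofReal_add hδ.le hδ.le, add_assoc]

theorem stmt_12 {K : Type*} [MetricSpace K] [CompactSpace K]
    [MeasurableSpace K] [BorelSpace K]
    (ν : Measure K) [IsFiniteMeasure ν]
    (δ : ℝ) (hδ : 0 < δ) (κ : ℝ≥0∞) (hκ : 0 < κ) :
    partialDiam ν κ ≤
      sepDist ν (κ / (coverNum K (ENNReal.ofReal δ) : ℝ≥0∞))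
        (κ / (coverNum K (ENNReal.ofReal δ) : ℝ≥0∞)) + ENNReal.ofReal (2 * δ) :=
  stmt_12_general ν δ hδ κ
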